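/- For all real numbers u, v > 0, the first coordinate of the harmonic measure has mean u: ∫ z₁ Q_{(u,v)}(dz) = u, i.e., ∫₀^∞ ū·(4/π)·u·v·ū/(4u²v² + (ū² + v² − u²)²) dū = u. Symmetrically, ∫ z₂ Q_{(u,v)}(dz) = v. -/

import Mathlib

open MeasureTheory Real Set Filter Topology

/-! Since `4u²v² + (t² + v² - u²)² = ((t - u)² + v²)((t + u)² + v²)`, partial fractions give
an elementary primitive of `t` times the boundary density, a combination of logarithms and
arctangents. It vanishes at `0` (the logarithm cancels and `arctan` is odd)
and tends to `(v/π)(u/v)π = u` at infinity; the integrand is nonnegative, so the improper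
integral is `u - 0`. The second identity is the first one with `u` and `v` swapped. -/

noncomputable section

def boundaryDensity (u v t : ℝ) : ℝ :=
  (4 / π) * (u * v * t) / (4 * u ^ 2 * v ^ 2 + (t ^ 2 + v ^ 2 - u ^ 2) ^ 2)

def boundaryMeanPrimitive (u v t : ℝ) : ℝ :=
  (v / π) * ((log ((t - u) ^ 2 + v ^ 2) - log ((t + u) ^ 2 + v ^ 2)) / 2
    + (u / v) * (arctan ((t - u) / v) + arctan ((t + u) / v)))

end

lemma boundaryDensity_symm (u v t : ℝ) : boundaryDensity v u t =
    (4 / π) * (u * v * t) / (4 * u ^ 2 * v ^ 2 + (t ^ 2 + u ^ 2 - v ^ 2) ^ 2) := by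
  unfold boundaryDensity
  ring

section

variable {u v : ℝ}

lemma boundaryDensity_nonneg (hu : 0 ≤ u) (hv : 0 ≤ v) {t : ℝ} (ht : 0 ≤ t) :
    0 ≤ boundaryDensity u v t := by
  unfold boundaryDensity
  have := pi_pos
  positivity

lemma hasDerivAt_boundaryMeanPrimitive (hv : v ≠ 0) (t : ℝ) :
    HasDerivAt (boundaryMeanPrimitive u v) (t * boundaryDensity u v t) t := by
  have hA : (t - u) ^ 2 + v ^ 2 ≠ 0 := by positivity
  have hB : (t + u) ^ 2 + v ^ 2 ≠ 0 := by positivity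
  have hA_deriv : HasDerivAt (fun s => (s - u) ^ 2 + v ^ 2) (2 * (t - u)) t := by
    simpa using (((hasDerivAt_id t).sub_const u).pow 2).add_const (v ^ 2)
  have hB_deriv : HasDerivAt (fun s => (s + u) ^ 2 + v ^ 2) (2 * (t + u)) t := by
    simpa using (((hasDerivAt_id t).add_const u).pow 2).add_const (v ^ 2)
  have hlog := (hA_deriv.log hA).sub (hB_deriv.log hB)
  have harctan := (((hasDerivAt_id' t).sub_const u).div_const v).arctan.add
    (((hasDerivAt_id' t).add_const u).div_const v).arctan
  refine (((hlog.div_const 2).add (harctan.const_mul (u / v))).const_mul (v / π)).congr_deriv ?_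
  have hfactor : 4 * u ^ 2 * v ^ 2 + (t ^ 2 + v ^ 2 - u ^ 2) ^ 2
      = ((t - u) ^ 2 + v ^ 2) * ((t + u) ^ 2 + v ^ 2) := by ring
  have hA' : 1 + ((t - u) / v) ^ 2 ≠ 0 := by positivity
  have hB' : 1 + ((t + u) / v) ^ 2 ≠ 0 := by positivity
  simp only [boundaryDensity, hfactor]
  field_simp
  ring

lemma boundaryMeanPrimitive_zero (u v : ℝ) : boundaryMeanPrimitive u v 0 = 0 := by
  simp [boundaryMeanPrimitive, neg_div, arctan_neg, sub_eq_add_neg]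

lemma tendsto_log_sub_log_atTop (hv : v ≠ 0) :
    Tendsto (fun t => log ((t - u) ^ 2 + v ^ 2) - log ((t + u) ^ 2 + v ^ 2)) atTop (𝓝 0) := by
  have hcont : ContinuousAt (fun s => log ((1 - u * s) ^ 2 + (v * s) ^ 2)
      - log ((1 + u * s) ^ 2 + (v * s) ^ 2)) 0 := by
    apply ContinuousAt.sub <;> exact (continuousAt_log (by norm_num)).comp (by fun_prop)
  -- substitute `s = 1/t`: both arguments are rescaled by `t²`, which cancels in the difference
  have hlim : Tendsto (fun s => log ((1 - u * s) ^ 2 + (v * s) ^ 2)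
      - log ((1 + u * s) ^ 2 + (v * s) ^ 2)) (𝓝 0) (𝓝 0) := by simpa using hcont.tendsto
  refine (hlim.comp tendsto_inv_atTop_zero).congr' ?_
  filter_upwards [eventually_gt_atTop 0] with t ht
  have ht2 : t ^ 2 ≠ 0 := by positivity
  have hA : (t - u) ^ 2 + v ^ 2 ≠ 0 := by positivity
  have hB : (t + u) ^ 2 + v ^ 2 ≠ 0 := by positivity
  have eA : (1 - u * t⁻¹) ^ 2 + (v * t⁻¹) ^ 2 = ((t - u) ^ 2 + v ^ 2) / t ^ 2 := by field_simp
  have eB : (1 + u * t⁻¹) ^ 2 + (v * t⁻¹) ^ 2 = ((t + u) ^ 2 + v ^ 2) / t ^ 2 := by field_simp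
  simp only [Function.comp_apply, eA, eB, log_div hA ht2, log_div hB ht2]
  ring

lemma tendsto_arctan_add_div_atTop (a : ℝ) (hv : 0 < v) :
    Tendsto (fun t => arctan ((t + a) / v)) atTop (𝓝 (π / 2)) :=
  (tendsto_arctan_atTop.mono_right nhdsWithin_le_nhds).comp
    ((tendsto_atTop_add_const_right _ a tendsto_id).atTop_div_const hv)

lemma tendsto_boundaryMeanPrimitive_atTop (hv : 0 < v) :
    Tendsto (boundaryMeanPrimitive u v) atTop (𝓝 u) := by
  have harctan := (tendsto_arctan_add_div_atTop (-u) hv).add (tendsto_arctan_add_div_atTop u hv)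
  simp only [← sub_eq_add_neg] at harctan
  unfold boundaryMeanPrimitive
  convert ((((tendsto_log_sub_log_atTop hv.ne').div_const 2).add
    (harctan.const_mul (u / v))).const_mul (v / π)) using 2
  field_simp
  ring

lemma integral_Ioi_mul_boundaryDensity (hu : 0 ≤ u) (hv : 0 < v) :
    ∫ t in Ioi (0 : ℝ), t * boundaryDensity u v t = u := by
  have hderiv := hasDerivAt_boundaryMeanPrimitive (u := u) hv.ne'
  rw [integral_Ioi_of_hasDerivAt_of_nonneg (hderiv 0).continuousAt.continuousWithinAt
    (fun t _ => hderiv t)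
    (fun t ht => mul_nonneg (le_of_lt ht) (boundaryDensity_nonneg hu hv.le (le_of_lt ht)))
    (tendsto_boundaryMeanPrimitive_atTop hv), boundaryMeanPrimitive_zero, sub_zero]

end

theorem harmonic_measure_mean (u v : ℝ) (hu : 0 < u) (hv : 0 < v) :
    (∫ t in Ioi (0 : ℝ),
        t * ((4 / π) * (u * v * t) / (4 * u ^ 2 * v ^ 2 + (t ^ 2 + v ^ 2 - u ^ 2) ^ 2)) = u)
    ∧ (∫ t in Ioi (0 : ℝ),
        t * ((4 / π) * (u * v * t) / (4 * u ^ 2 * v ^ 2 + (t ^ 2 + u ^ 2 - v ^ 2) ^ 2)) = v) := by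
  refine ⟨integral_Ioi_mul_boundaryDensity hu.le hv, ?_⟩
  simpa only [boundaryDensity_symm] using integral_Ioi_mul_boundaryDensity hv.le hu
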